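/- arXiv:1612.03332 — 4 statements merged into one kernel-verified Lean document; each statement's English description precedes it below -/
import Mathlib

section
/- Let B ⊂ ℝⁿ be a symmetric convex body (B = -B, convex, bounded, with nonempty interior), let Λ ⊂ ℝⁿ be a full-rank lattice, and let A = Λ ∩ B be finite and nonempty. Then |A + A| ≤ 5ⁿ · |A|, where A + A = {a₁ + a₂ : a₁, a₂ ∈ A} is the Minkowski sumset. -/
/-!
Ruzsa's covering argument, with volume in place of cardinality. Put `U = ½ B`, choose a maximal
`X ⊆ A + A` whose translates `x + U` are pairwise disjoint. Maximality gives
`A + A ⊆ X + (U - U) = X + B`, and since `X` and `A + A` lie in `Λ`, even `A + A ⊆ X + A`, so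
`|A + A| ≤ |X| |A|`. The disjoint translates lie in `A + A + U ⊆ 2B + ½B = 5U`, whence
`|X| vol U ≤ 5ⁿ vol U`.
-/

open Pointwise MeasureTheory Finset Module

section RuzsaCovering

variable {G : Type*} [AddGroup G] [MeasurableSpace G] [MeasurableAdd G] {μ : Measure G}
  [μ.IsAddLeftInvariant] {U : Set G}

theorem measure_add_eq_card_mul_of_pairwiseDisjoint (hU : NullMeasurableSet U μ) {X : Finset G}
    (hX : (X : Set G).PairwiseDisjoint (· +ᵥ U)) : μ (X + U) = #X * μ U := by
  have hXU : (X + U : Set G) = ⋃ x ∈ X, x +ᵥ U := Set.iUnion_add_left_image.symm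
  rw [hXU, measure_biUnion_finset₀ hX.aedisjoint fun x _ ↦ hU.vadd x]
  simp [measure_vadd]

theorem exists_subset_card_mul_measure_le_and_subset_add_sub (S : Finset G)
    (hU : NullMeasurableSet U μ) (hU₀ : U.Nonempty) :
    ∃ X ⊆ S, #X * μ U ≤ μ (S + U) ∧ (S : Set G) ⊆ X + (U - U) := by
  classical
  obtain ⟨X, hXmax⟩ := (S.powerset.filter fun X : Finset G ↦
    (X : Set G).PairwiseDisjoint (· +ᵥ U)).exists_maximal ⟨∅, by simp⟩
  simp only [mem_filter, mem_powerset] at hXmax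
  obtain ⟨hXS, hX⟩ := hXmax.1
  refine ⟨X, hXS, ?_, fun a ha ↦ ?_⟩
  · rw [← measure_add_eq_card_mul_of_pairwiseDisjoint hU hX]
    exact measure_mono (Set.add_subset_add_right (by exact_mod_cast hXS))
  by_cases haX : a ∈ X
  · exact Set.subset_add_left _ hU₀.zero_mem_sub haX
  by_cases! H : ∀ b ∈ X, Disjoint (a +ᵥ U) (b +ᵥ U)
  · refine (hXmax.not_gt ?_ <| ssubset_insert haX).elim
    rw [insert_subset_iff, coe_insert]
    exact ⟨⟨ha, hXS⟩, hX.insert fun _ hb _ ↦ H _ hb⟩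
  obtain ⟨b, hb, hab⟩ := H
  obtain ⟨_, ⟨u, hu, rfl⟩, ⟨v, hv, hvu⟩⟩ := Set.not_disjoint_iff.1 hab
  refine ⟨b, hb, v - u, Set.sub_mem_sub hv hu, ?_⟩
  simp only [vadd_eq_add] at hvu
  simp only [← add_sub_assoc, hvu, add_sub_cancel_right]

end RuzsaCovering

theorem AddSubgroup.subset_add_inter_of_subset_add {G : Type*} [AddCommGroup G]
    (Λ : AddSubgroup G) {S X B : Set G} (hS : S ⊆ X + B) (hSΛ : S ⊆ Λ) (hXΛ : X ⊆ Λ) :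
    S ⊆ X + ((Λ : Set G) ∩ B) := by
  intro z hz
  obtain ⟨x, hx, c, hc, rfl⟩ := hS hz
  refine ⟨x, hx, c, ⟨?_, hc⟩, rfl⟩
  simpa using Λ.sub_mem (hSΛ hz) (hXΛ hx)

theorem Convex.half_smul_sub_half_smul {E : Type*} [AddCommGroup E] [Module ℝ E] {B : Set E}
    (hB : Convex ℝ B) (hBsymm : -B = B) : (2⁻¹ : ℝ) • B - (2⁻¹ : ℝ) • B = B := by
  rw [sub_eq_add_neg, ← Set.smul_set_neg, hBsymm, ← hB.add_smul (by norm_num) (by norm_num)]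
  norm_num

theorem Convex.add_add_half_smul_subset {E : Type*} [AddCommGroup E] [Module ℝ E] {B S : Set E}
    (hB : Convex ℝ B) (hS : S ⊆ B) : S + S + (2⁻¹ : ℝ) • B ⊆ (5 : ℝ) • (2⁻¹ : ℝ) • B := by
  set U : Set E := (2⁻¹ : ℝ) • B
  have hU : Convex ℝ U := hB.smul _
  have hBU : B = (2 : ℝ) • U := by simp [U, smul_smul]
  calc S + S + U ⊆ B + B + U := by gcongr
    _ = (2 + 2 + 1 : ℝ) • U := by
      rw [hU.add_smul (by norm_num) zero_le_one, hU.add_smul zero_le_two zero_le_two, one_smul, hBU]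
    _ = (5 : ℝ) • U := by norm_num

theorem card_add_le_five_pow_finrank_mul_card {E : Type*} [NormedAddCommGroup E]
    [NormedSpace ℝ E] [FiniteDimensional ℝ E] [MeasurableSpace E] [BorelSpace E] [DecidableEq E]
    {B : Set E} (hB : Convex ℝ B) (hBsymm : -B = B) (hBbdd : Bornology.IsBounded B)
    (hBint : (interior B).Nonempty) (Λ : AddSubgroup E) {A : Finset E}
    (hA : (A : Set E) = (Λ : Set E) ∩ B) :
    #(A + A) ≤ 5 ^ finrank ℝ E * #A := by
  obtain ⟨μ, _⟩ : ∃ μ : Measure E, μ.IsAddHaarMeasure := ⟨Measure.addHaar, inferInstance⟩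
  set U : Set E := (2⁻¹ : ℝ) • B
  have hμU₀ : μ U ≠ 0 := by
    rw [Measure.addHaar_smul_of_nonneg μ (by norm_num)]
    exact mul_ne_zero (by simp) (Measure.measure_pos_of_nonempty_interior μ hBint).ne'
  have hμU : μ U ≠ ⊤ := (hBbdd.smul₀ _).measure_lt_top.ne
  have hAΛ : (A : Set E) ⊆ Λ := hA ▸ Set.inter_subset_left
  have hAAΛ : ((A + A : Finset E) : Set E) ⊆ Λ := by
    rw [coe_add]
    exact AddSubgroup.add_subset hAΛ hAΛ
  obtain ⟨X, hXS, hXμ, hcover⟩ := exists_subset_card_mul_measure_le_and_subset_add_sub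
    (A + A) ((hB.smul _).nullMeasurableSet (μ := μ)) (hBint.mono interior_subset).smul_set
  have hX : #X ≤ 5 ^ finrank ℝ E := by
    have : (#X : ENNReal) * μ U ≤ 5 ^ finrank ℝ E * μ U := calc
      _ ≤ μ (↑(A + A) + U) := hXμ
      _ ≤ μ ((5 : ℝ) • U) := by
        rw [coe_add]
        exact measure_mono (hB.add_add_half_smul_subset (hA ▸ Set.inter_subset_right))
      _ = _ := by rw [Measure.addHaar_smul_of_nonneg μ (by norm_num)]; simp
    exact_mod_cast (ENNReal.mul_le_mul_iff_left hμU₀ hμU).1 this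
  have hAAX : A + A ⊆ X + A := by
    rw [← coe_subset, coe_add X, hA]
    exact Λ.subset_add_inter_of_subset_add (hB.half_smul_sub_half_smul hBsymm ▸ hcover) hAAΛ
      ((coe_subset.2 hXS).trans hAAΛ)
  calc #(A + A) ≤ #(X + A) := card_le_card hAAX
    _ ≤ #X * #A := card_add_le
    _ ≤ 5 ^ finrank ℝ E * #A := Nat.mul_le_mul_right _ hX

theorem setOf_sum_intCast_smul_eq_span {ι E : Type*} [Fintype ι] [AddCommGroup E] [Module ℝ E]
    (b : ι → E) :
    {x | ∃ a : ι → ℤ, x = ∑ i, (a i : ℝ) • b i} = Submodule.span ℤ (Set.range b) := by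
  ext x
  simp only [Set.mem_ofPred_eq, SetLike.mem_coe, Submodule.mem_span_range_iff_exists_fun,
    Int.cast_smul_eq_zsmul, eq_comm]

theorem sumset_lattice_convex_body_le_general (n : ℕ)
    (B : Set (EuclideanSpace ℝ (Fin n)))
    (hBsym : B = -B) (hBconv : Convex ℝ B)
    (hBbdd : Bornology.IsBounded B) (hBint : (interior B).Nonempty)
    (b : Fin n → EuclideanSpace ℝ (Fin n))
    (Λ : Set (EuclideanSpace ℝ (Fin n)))
    (hΛ : Λ = {x | ∃ a : Fin n → ℤ, x = ∑ i, (a i : ℝ) • b i})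
    (A : Set (EuclideanSpace ℝ (Fin n))) (hA : A = Λ ∩ B)
    (hfin : A.Finite) :
    (A + A).ncard ≤ 5 ^ n * A.ncard := by
  classical
  lift A to Finset (EuclideanSpace ℝ (Fin n)) using hfin
  rw [← coe_add, Set.ncard_coe_finset, Set.ncard_coe_finset]
  rw [hΛ, setOf_sum_intCast_smul_eq_span] at hA
  simpa using card_add_le_five_pow_finrank_mul_card hBconv hBsym.symm hBbdd hBint
    (Submodule.span ℤ (Set.range b)).toAddSubgroup hA

/-- lattice points in a symmetric convex body have doubling at most 5^n. -/
theorem sumset_lattice_convex_body_le (n : ℕ)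
    (B : Set (EuclideanSpace ℝ (Fin n)))
    (hBsym : B = -B) (hBconv : Convex ℝ B)
    (hBbdd : Bornology.IsBounded B) (hBint : (interior B).Nonempty)
    (b : Fin n → EuclideanSpace ℝ (Fin n)) (hb : LinearIndependent ℝ b)
    (Λ : Set (EuclideanSpace ℝ (Fin n)))
    (hΛ : Λ = {x | ∃ a : Fin n → ℤ, x = ∑ i, (a i : ℝ) • b i})
    (A : Set (EuclideanSpace ℝ (Fin n))) (hA : A = Λ ∩ B)
    (hfin : A.Finite) (hne : A.Nonempty) :
    (A + A).ncard ≤ 5 ^ n * A.ncard :=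
  sumset_lattice_convex_body_le_general n B hBsym hBconv hBbdd hBint b Λ hΛ A hA hfin
end

section
/- For every integer N ≥ 1, let B ⊂ ℝ³ be the convex hull of the four points (N,0,0), (−N,0,0), (0,N,1), (0,−N,1), and let A = ℤ³ ∩ B. Then |A| = 4N + 2 and |A + A| ≥ (2N + 1)². -/
/-!
The tetrahedron is the join of its two opposite edges, which lie in the planes where the last
coordinate is `0` and `1`. An integer point of the join has last coordinate `0` or `1`, so it lies
on one of the two edges: `A` consists of the `2N + 1` lattice points of each edge. The sums of a
point of the lower edge and a point of the upper edge are the `(2N + 1)²` distinct points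
`(a, b, 1)` with `|a|, |b| ≤ N`.
-/

open Pointwise Set

section ConvexJoin

variable {E : Type*} [AddCommGroup E] [Module ℝ E]

theorem segment_smul_add_eq_image (v w : E) {a b : ℝ} (hab : a ≤ b) :
    segment ℝ (b • v + w) (a • v + w) = (fun t : ℝ => t • v + w) '' Icc a b := by
  rw [segment_symm, ← segment_eq_Icc hab]
  exact (image_segment ℝ ((LinearMap.toSpanSingleton ℝ E v).toAffineMap +
    AffineMap.const ℝ ℝ w) a b).symm

theorem mem_union_of_mem_convexJoin_of_apply_eq_intCast (φ : E →ₗ[ℝ] ℝ) {s t : Set E}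
    (hs : ∀ x ∈ s, φ x = 0) (ht : ∀ y ∈ t, φ y = 1) {z : E} (hz : z ∈ convexJoin ℝ s t)
    {n : ℤ} (hn : φ z = n) : z ∈ s ∪ t := by
  obtain ⟨x, hx, y, hy, a, b, ha, hb, hab, rfl⟩ := mem_convexJoin.1 hz
  have hbn : b = n := by simpa [hs x hx, ht y hy] using hn
  have hn01 : n = 0 ∨ n = 1 := by
    have h0 : (0 : ℝ) ≤ n := hbn ▸ hb
    have h1 : (n : ℝ) ≤ 1 := hbn ▸ (by linarith)
    norm_cast at h0 h1
    omega
  rcases hn01 with rfl | rfl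
  · obtain rfl : a = 1 := by push_cast at hbn; linarith
    simpa [hbn] using Or.inl hx
  · obtain rfl : a = 0 := by push_cast at hbn; linarith
    simpa [hbn] using Or.inr hy

end ConvexJoin

theorem Set.ncard_add_of_injOn {G : Type*} [Add G] {s t : Set G}
    (h : InjOn (fun p : G × G => p.1 + p.2) (s ×ˢ t)) : (s + t).ncard = s.ncard * t.ncard := by
  rw [← image2_add, ← image_uncurry_prod]
  exact h.ncard_image.trans ncard_prod

theorem Set.ncard_Icc_int (a b : ℤ) : (Icc a b).ncard = (b + 1 - a).toNat := by
  rw [← Finset.coe_Icc, ncard_coe_finset, Int.card_Icc]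

theorem segment_lower_edge (c : ℝ) (hc : 0 ≤ c) :
    segment ℝ ![c, 0, 0] ![-c, 0, 0] = (fun t : ℝ => ![t, 0, 0]) '' Icc (-c) c := by
  have h (t : ℝ) : ![t, 0, 0] = t • ![1, 0, 0] + 0 := by ext i; fin_cases i <;> simp
  rw [h c, h (-c), show (fun t : ℝ => ![t, 0, 0]) = _ from funext h]
  exact segment_smul_add_eq_image _ _ (by linarith)

theorem segment_upper_edge (c : ℝ) (hc : 0 ≤ c) :
    segment ℝ ![0, c, 1] ![0, -c, 1] = (fun t : ℝ => ![0, t, 1]) '' Icc (-c) c := by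
  have h (t : ℝ) : ![0, t, 1] = t • ![0, 1, 0] + ![0, 0, 1] := by ext i; fin_cases i <;> simp
  rw [h c, h (-c), show (fun t : ℝ => ![0, t, 1]) = _ from funext h]
  exact segment_smul_add_eq_image _ _ (by linarith)

def lowerEdge (N : ℕ) : Set (Fin 3 → ℝ) := (fun k : ℤ => ![(k : ℝ), 0, 0]) '' Icc (-(N : ℤ)) N

def upperEdge (N : ℕ) : Set (Fin 3 → ℝ) := (fun k : ℤ => ![0, (k : ℝ), 1]) '' Icc (-(N : ℤ)) N

theorem finite_lowerEdge (N : ℕ) : (lowerEdge N).Finite := (finite_Icc _ _).image _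

theorem finite_upperEdge (N : ℕ) : (upperEdge N).Finite := (finite_Icc _ _).image _

theorem ncard_lowerEdge (N : ℕ) : (lowerEdge N).ncard = 2 * N + 1 := by
  rw [lowerEdge, ncard_image_of_injective _ fun a b h => by simpa using congrFun h 0,
    ncard_Icc_int]
  omega

theorem ncard_upperEdge (N : ℕ) : (upperEdge N).ncard = 2 * N + 1 := by
  rw [upperEdge, ncard_image_of_injective _ fun a b h => by simpa using congrFun h 1,
    ncard_Icc_int]
  omega

theorem disjoint_lowerEdge_upperEdge (N : ℕ) : Disjoint (lowerEdge N) (upperEdge N) := by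
  rw [Set.disjoint_left]
  rintro _ ⟨a, -, rfl⟩ ⟨b, -, hb⟩
  simpa using congrFun hb 2

theorem ncard_lowerEdge_add_upperEdge (N : ℕ) :
    (lowerEdge N + upperEdge N).ncard = (2 * N + 1) ^ 2 := by
  rw [ncard_add_of_injOn, ncard_lowerEdge, ncard_upperEdge, sq]
  rintro ⟨_, _⟩ ⟨⟨a, -, rfl⟩, ⟨b, -, rfl⟩⟩ ⟨_, _⟩ ⟨⟨a', -, rfl⟩, ⟨b', -, rfl⟩⟩ h
  exact Prod.ext (by simpa using congrFun h 0) (by simpa using congrFun h 1)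

theorem integerPoints_convexHull_eq_lowerEdge_union_upperEdge (N : ℕ) :
    {x : Fin 3 → ℝ | ∀ i, ∃ z : ℤ, x i = z} ∩ convexHull ℝ {![(N : ℝ), 0, 0], ![-(N : ℝ), 0, 0],
      ![0, (N : ℝ), 1], ![0, -(N : ℝ), 1]} = lowerEdge N ∪ upperEdge N := by
  have hcast (k : ℤ) : (k : ℝ) ∈ Icc (-(N : ℝ)) N ↔ k ∈ Icc (-(N : ℤ)) N := by
    simp only [mem_Icc]; norm_cast
  have hne : (Icc (-(N : ℝ)) N).Nonempty := nonempty_Icc.2 (neg_le_self N.cast_nonneg)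
  rw [← convexJoin_segments, segment_lower_edge _ N.cast_nonneg,
    segment_upper_edge _ N.cast_nonneg]
  ext x
  constructor
  · rintro ⟨hx, hxB⟩
    obtain ⟨n, hn⟩ := hx 2
    have h01 := mem_union_of_mem_convexJoin_of_apply_eq_intCast (LinearMap.proj 2)
      (by rintro _ ⟨t, -, rfl⟩; simp) (by rintro _ ⟨t, -, rfl⟩; simp) hxB hn
    rcases h01 with ⟨t, ht, rfl⟩ | ⟨t, ht, rfl⟩
    · obtain ⟨k, hk : t = k⟩ := hx 0
      subst hk
      exact Or.inl ⟨k, (hcast k).1 ht, rfl⟩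
    · obtain ⟨k, hk : t = k⟩ := hx 1
      subst hk
      exact Or.inr ⟨k, (hcast k).1 ht, rfl⟩
  · rintro (⟨k, hk, rfl⟩ | ⟨k, hk, rfl⟩)
    · refine ⟨fun i => ?_, subset_convexJoin_left (hne.image _) ⟨k, (hcast k).2 hk, rfl⟩⟩
      fin_cases i <;> simp [eq_comm]
    · refine ⟨fun i => ?_, subset_convexJoin_right (hne.image _) ⟨k, (hcast k).2 hk, rfl⟩⟩
      fin_cases i <;> simp [eq_comm]

theorem nonsymmetric_counterexample_general (N : ℕ)
    (B : Set (Fin 3 → ℝ))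
    (hB : B = convexHull ℝ {![(N : ℝ), 0, 0], ![-(N : ℝ), 0, 0],
      ![0, (N : ℝ), 1], ![0, -(N : ℝ), 1]})
    (A : Set (Fin 3 → ℝ))
    (hA : A = {x | ∀ i, ∃ z : ℤ, x i = (z : ℝ)} ∩ B) :
    A.ncard = 4 * N + 2 ∧ (2 * N + 1) ^ 2 ≤ (A + A).ncard := by
  rw [hA, hB, integerPoints_convexHull_eq_lowerEdge_union_upperEdge]
  have hfin := (finite_lowerEdge N).union (finite_upperEdge N)
  constructor
  · rw [ncard_union_eq (disjoint_lowerEdge_upperEdge N) (finite_lowerEdge N)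
      (finite_upperEdge N), ncard_lowerEdge, ncard_upperEdge]
    ring
  · calc (2 * N + 1) ^ 2 = (lowerEdge N + upperEdge N).ncard :=
          (ncard_lowerEdge_add_upperEdge N).symm
      _ ≤ _ := ncard_le_ncard (add_subset_add subset_union_left subset_union_right)
          (hfin.add hfin)

/-- counterexample for non-symmetric convex bodies. -/
theorem nonsymmetric_counterexample (N : ℕ) (hN : 1 ≤ N)
    (B : Set (Fin 3 → ℝ))
    (hB : B = convexHull ℝ {![(N : ℝ), 0, 0], ![-(N : ℝ), 0, 0],
      ![0, (N : ℝ), 1], ![0, -(N : ℝ), 1]})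
    (A : Set (Fin 3 → ℝ))
    (hA : A = {x | ∀ i, ∃ z : ℤ, x i = (z : ℝ)} ∩ B) :
    A.ncard = 4 * N + 2 ∧ (2 * N + 1) ^ 2 ≤ (A + A).ncard :=
  nonsymmetric_counterexample_general N B hB A hA
end

section
/- (Blichfeldt–van der Corput.) For any full-rank lattice Λ ⊂ ℝⁿ with det(Λ) ≤ 1 and any r > 0, the number of lattice points in the closed Euclidean ball of radius r centered at the origin satisfies |Λ ∩ B(r)| ≥ 2^{−n} · vol(B(r)). -/
/-! If every point is covered by at most `N` translates `g + S` of a set `S` by a lattice `L`,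
then cutting `S` along a fundamental domain `F` and translating the pieces back into `F` gives
`vol S ≤ N · vol F`. A point lies in `g + S` and `g₀ + S` only if `g - g₀ ∈ L ∩ (S - S)`,
so one may take `N = #(L ∩ (S - S))`. For `S = B(r/2)` we have `S - S = B(r)`,
`vol S = 2⁻ⁿ vol B(r)` and `vol F = |det Λ| ≤ 1`. -/

open Pointwise MeasureTheory
open Set Submodule Metric

theorem AddSubgroup.encard_setOf_mem_vadd_le {E : Type*} [AddCommGroup E] (L : AddSubgroup E)
    (S : Set E) (x : E) :
    {g : L | x ∈ g +ᵥ S}.encard ≤ ((L : Set E) ∩ (S - S)).encard := by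
  rcases eq_empty_or_nonempty {g : L | x ∈ g +ᵥ S} with h | ⟨g₀, hg₀⟩
  · simp [h]
  -- `g - g₀ = (x - g₀) - (x - g)` with both `x - g₀` and `x - g` in `S`
  refine encard_le_encard_of_injOn (f := fun g : L => (g - g₀ : E)) ?_ ?_
  · intro g hg
    simp only [mem_ofPred_eq, mem_vadd_set_iff_neg_vadd_mem, AddSubgroup.vadd_def, vadd_eq_add,
      neg_add_eq_sub] at hg hg₀
    exact ⟨sub_mem g.2 g₀.2, x - g₀, hg₀, x - g, hg, sub_sub_sub_cancel_left _ _ _⟩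
  · intro g _ g' _ h
    exact Subtype.ext (sub_left_injective h)

open scoped ENNReal in
theorem MeasureTheory.IsAddFundamentalDomain.measure_le_mul_of_encard_le {G α : Type*}
    [AddGroup G] [Countable G] [AddAction G α] [MeasurableSpace α] [MeasurableConstVAdd G α]
    {μ : Measure α} [VAddInvariantMeasure G α μ] {F S : Set α}
    (hF : IsAddFundamentalDomain G F μ) (hS : MeasurableSet S) {N : ℕ∞}
    (hN : ∀ x, {g : G | x ∈ g +ᵥ S}.encard ≤ N) :
    μ S ≤ N * μ F := by
  have hmeas (g : G) : MeasurableSet (g +ᵥ S) := hS.const_vadd g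
  have hcover (x : α) : ∑' g : G, (g +ᵥ S).indicator (1 : α → ℝ≥0∞) x ≤ N := by
    calc ∑' g : G, (g +ᵥ S).indicator (1 : α → ℝ≥0∞) x
        = ∑' g : G, {g : G | x ∈ g +ᵥ S}.indicator 1 g := rfl
      _ = {g : G | x ∈ g +ᵥ S}.encard := by rw [← tsum_subtype, ← ENNReal.tsum_set_one]; rfl
      _ ≤ N := by exact_mod_cast hN x
  calc μ S = ∑' g : G, μ.restrict F (g +ᵥ S) := by
        rw [hF.measure_eq_tsum]; simp only [Measure.restrict_apply (hmeas _)]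
    _ = ∫⁻ x in F, ∑' g : G, (g +ᵥ S).indicator 1 x ∂μ := by
        rw [lintegral_tsum fun g => (measurable_one.indicator (hmeas g)).aemeasurable]
        simp only [lintegral_indicator_one (hmeas _)]
    _ ≤ ∫⁻ _ in F, (N : ℝ≥0∞) ∂μ := lintegral_mono hcover
    _ = N * μ F := by rw [setLIntegral_const]

theorem ZSpan.measure_le_encard_inter_sub_mul {E ι : Type*} [NormedAddCommGroup E]
    [NormedSpace ℝ E] [MeasurableSpace E] [BorelSpace E] [Finite ι] (b : Module.Basis ι ℝ E)
    (μ : Measure E) [μ.IsAddLeftInvariant] {S : Set E} (hS : MeasurableSet S) :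
    μ S ≤ ((span ℤ (range b) : Set E) ∩ (S - S)).encard * μ (fundamentalDomain b) := by
  have := b.finiteDimensional_of_finite
  have : Countable (span ℤ (range b)).toAddSubgroup :=
    inferInstanceAs (Countable (span ℤ (range b)))
  exact (ZSpan.isAddFundamentalDomain' b μ).measure_le_mul_of_encard_le hS
    (AddSubgroup.encard_setOf_mem_vadd_le _ S)

theorem ZSpan.volume_fundamentalDomain_euclideanSpace {ι : Type*} [Fintype ι] [DecidableEq ι]
    (b : Module.Basis ι ℝ (EuclideanSpace ℝ ι)) :
    volume (fundamentalDomain b) = ENNReal.ofReal |(Matrix.of fun i j => b j i).det| := by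
  let e := (EuclideanSpace.basisFun ι ℝ).toBasis
  have he : volume (fundamentalDomain e) = 1 := by
    rw [measure_congr (fundamentalDomain_ae_parallelepiped e volume),
      OrthonormalBasis.coe_toBasis, OrthonormalBasis.volume_parallelepiped]
  have hdet : e.det b = (Matrix.of fun i j => b j i).det := by
    rw [Module.Basis.det_apply]
    rfl
  rw [measure_fundamentalDomain b volume e, he, hdet, mul_one]

theorem Submodule.coe_span_int_range_eq {R E ι : Type*} [Ring R] [AddCommGroup E] [Module R E]
    [Fintype ι] (b : ι → E) :
    (span ℤ (range b) : Set E) = {x | ∃ a : ι → ℤ, x = ∑ i, (a i : R) • b i} := by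
  ext x
  simp only [SetLike.mem_coe, mem_span_range_iff_exists_fun, Int.cast_smul_eq_zsmul, eq_comm,
    mem_ofPred_eq]

/-- Blichfeldt–van der Corput: a full-rank lattice of determinant at
most 1 has at least `2⁻ⁿ · vol(B(r))` points in the ball of radius `r`. -/
theorem blichfeldt_van_der_corput (n : ℕ)
    (b : Fin n → EuclideanSpace ℝ (Fin n)) (hb : LinearIndependent ℝ b)
    (hdet : |(Matrix.of (fun i j : Fin n => b j i)).det| ≤ 1)
    (Λ : Set (EuclideanSpace ℝ (Fin n)))
    (hΛ : Λ = {x | ∃ a : Fin n → ℤ, x = ∑ i, (a i : ℝ) • b i})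
    (r : ℝ) (hr : 0 < r) :
    (2 : ℝ)⁻¹ ^ n * (volume (Metric.closedBall (0 : EuclideanSpace ℝ (Fin n)) r)).toReal
      ≤ ((Λ ∩ Metric.closedBall 0 r).ncard : ℝ) := by
  set B := basisOfLinearIndependentOfCardEqFinrank' (K := ℝ) b hb (by simp)
  have hΛB : Λ = (span ℤ (range B) : Set (EuclideanSpace ℝ (Fin n))) := by
    rw [hΛ, coe_basisOfLinearIndependentOfCardEqFinrank', coe_span_int_range_eq (R := ℝ)]
  have hfin : (Λ ∩ closedBall 0 r).Finite := by
    rw [hΛB, inter_comm]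
    exact ZSpan.setFinite_inter B isBounded_closedBall
  have hdiff : closedBall (0 : EuclideanSpace ℝ (Fin n)) (r / 2) - closedBall 0 (r / 2)
      = closedBall 0 r := by
    rw [closedBall_sub_closedBall (half_pos hr).le (half_pos hr).le, sub_zero, add_halves]
  have hvolF : volume (ZSpan.fundamentalDomain B) ≤ 1 := by
    rw [ZSpan.volume_fundamentalDomain_euclideanSpace,
      coe_basisOfLinearIndependentOfCardEqFinrank']
    exact ENNReal.ofReal_le_one.mpr hdet
  have hhalf : volume (closedBall (0 : EuclideanSpace ℝ (Fin n)) (r / 2))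
      = ENNReal.ofReal ((2 : ℝ)⁻¹ ^ n) *
          volume (closedBall (0 : EuclideanSpace ℝ (Fin n)) r) := by
    rw [div_eq_inv_mul, Measure.addHaar_closedBall_mul_of_pos _ _ (by norm_num),
      finrank_euclideanSpace_fin]
  have hcount : volume (closedBall (0 : EuclideanSpace ℝ (Fin n)) (r / 2))
      ≤ (Λ ∩ closedBall 0 r).encard :=
    calc _ ≤ (Λ ∩ closedBall 0 r).encard * volume (ZSpan.fundamentalDomain B) := by
          simpa only [hΛB, hdiff] using
            ZSpan.measure_le_encard_inter_sub_mul B volume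
              (measurableSet_closedBall (x := 0) (ε := r / 2))
      _ ≤ (Λ ∩ closedBall 0 r).encard := mul_le_of_le_one_right' hvolF
  calc (2 : ℝ)⁻¹ ^ n * (volume (closedBall (0 : EuclideanSpace ℝ (Fin n)) r)).toReal
      = (volume (closedBall (0 : EuclideanSpace ℝ (Fin n)) (r / 2))).toReal := by
        rw [hhalf, ENNReal.toReal_mul, ENNReal.toReal_ofReal (by positivity)]
    _ ≤ ((Λ ∩ closedBall 0 r).encard : ENNReal).toReal :=
        ENNReal.toReal_mono (by simpa using hfin.encard_lt_top.ne) hcount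
    _ = (Λ ∩ closedBall 0 r).ncard := by rw [← hfin.cast_ncard_eq]; rfl
end

section
/- Let c ≥ 1 be a constant and suppose n is sufficiently large. Let Λ ⊂ ℝⁿ be a lattice with det(Λ) = 1, and suppose that for every lattice subspace W of Λ of dimension n/2, the number of points of Λ ∩ W in the ball of radius n^{5/8} is at most 2ⁿ. Set A = Λ ∩ B(n^{5/8}) and assume |A| ≥ n^{n/8}. Then for every d-dimensional GAP G ⊂ ℝⁿ with d ≤ cn and |G| ≤ |A|, we have |A ∩ G| ≤ n^{−n/(25c)} · |A|. -/
open Pointwise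

lemma aux_exists_min_subset {d : ℕ} (L : Fin d → ℤ) :
    ∀ m : ℕ, m ≤ d → ∃ F : Finset (Fin d), F.card = m ∧ ∀ i ∈ F, ∀ j ∉ F, L i ≤ L j := by
  intro m
  induction m with
  | zero => exact fun _ => ⟨∅, rfl, by simp⟩
  | succ m ih =>
    intro hm
    obtain ⟨F, hcard, hmin⟩ := ih (Nat.le_of_succ_le hm)
    have hne : Fᶜ.Nonempty := by
      rw [← Finset.card_pos, Finset.card_compl, hcard]
      simp only [Fintype.card_fin]
      omega
    obtain ⟨j₀, hj₀, hj₀min⟩ := Finset.exists_min_image Fᶜ L hne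
    have hj₀F : j₀ ∉ F := Finset.mem_compl.mp hj₀
    refine ⟨insert j₀ F, by rw [Finset.card_insert_of_notMem hj₀F, hcard], ?_⟩
    intro i hi j hj
    rcases Finset.mem_insert.mp hi with h | h
    · subst h
      exact hj₀min j (Finset.mem_compl.mpr fun hjF => hj (Finset.mem_insert_of_mem hjF))
    · exact hmin i h j (fun hjF => hj (Finset.mem_insert_of_mem hjF))

lemma aux_prod_pow {d : ℕ} (L : Fin d → ℤ) (hL : ∀ i, 1 ≤ L i) (F : Finset (Fin d))
    (hmin : ∀ i ∈ F, ∀ j ∉ F, L i ≤ L j) :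
    (∏ i ∈ F, L i) ^ d ≤ (∏ i, L i) ^ F.card := by
  have hd : F.card + Fᶜ.card = d := by
    rw [Finset.card_add_card_compl]; exact Fintype.card_fin d
  have hFnn : (0:ℤ) ≤ ∏ i ∈ F, L i :=
    Finset.prod_nonneg fun i _ => zero_le_one.trans (hL i)
  have key : (∏ i ∈ F, L i) ^ Fᶜ.card ≤ (∏ j ∈ Fᶜ, L j) ^ F.card := by
    calc (∏ i ∈ F, L i) ^ Fᶜ.card = ∏ _j ∈ Fᶜ, (∏ i ∈ F, L i) := by rw [Finset.prod_const]
      _ ≤ ∏ j ∈ Fᶜ, (L j) ^ F.card := by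
          apply Finset.prod_le_prod (fun _ _ => hFnn)
          intro j hj
          rw [← Finset.prod_const]
          exact Finset.prod_le_prod (fun i _ => zero_le_one.trans (hL i))
            (fun i hi => hmin i hi j (Finset.mem_compl.mp hj))
      _ = (∏ j ∈ Fᶜ, L j) ^ F.card := by rw [Finset.prod_pow]
  calc (∏ i ∈ F, L i) ^ d = (∏ i ∈ F, L i) ^ F.card * (∏ i ∈ F, L i) ^ Fᶜ.card := by
        rw [← pow_add, hd]
    _ ≤ (∏ i ∈ F, L i) ^ F.card * (∏ j ∈ Fᶜ, L j) ^ F.card :=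
        mul_le_mul_of_nonneg_left key (pow_nonneg hFnn _)
    _ = (∏ i, L i) ^ F.card := by rw [← mul_pow, Finset.prod_mul_prod_compl]

lemma aux_extend {n : ℕ} (bas : Fin n → EuclideanSpace ℝ (Fin n))
    (hspan : Submodule.span ℝ (Set.range bas) = ⊤)
    (Λ : Set (EuclideanSpace ℝ (Fin n))) (hbasΛ : ∀ i, bas i ∈ Λ) :
    ∀ (k : ℕ) (S : Set (EuclideanSpace ℝ (Fin n))), S ⊆ Λ →
      Module.finrank ℝ (Submodule.span ℝ S) + k ≤ n →
      ∃ S', S ⊆ S' ∧ S' ⊆ Λ ∧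
        Module.finrank ℝ (Submodule.span ℝ S') = Module.finrank ℝ (Submodule.span ℝ S) + k := by
  intro k
  induction k with
  | zero => exact fun S hS _ => ⟨S, subset_rfl, hS, by simp⟩
  | succ k ih =>
    intro S hS hle
    have hlt : Module.finrank ℝ (Submodule.span ℝ S) < n := by omega
    have hex : ∃ i, bas i ∉ Submodule.span ℝ S := by
      by_contra h
      push_neg at h
      have htop : Submodule.span ℝ S = ⊤ := by
        rw [eq_top_iff, ← hspan]
        exact Submodule.span_le.mpr (by rintro _ ⟨i, rfl⟩; exact h i)
      rw [htop, finrank_top, finrank_euclideanSpace_fin] at hlt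
      omega
    obtain ⟨i, hi⟩ := hex
    have hx0 : bas i ≠ 0 := fun h => hi (h ▸ Submodule.zero_mem _)
    have hins : Module.finrank ℝ (Submodule.span ℝ (insert (bas i) S)) =
        Module.finrank ℝ (Submodule.span ℝ S) + 1 := by
      rw [Submodule.span_insert]
      have hinf : Submodule.span ℝ {bas i} ⊓ Submodule.span ℝ S = ⊥ := by
        rw [eq_bot_iff]
        intro y hy
        rw [Submodule.mem_inf] at hy
        obtain ⟨c, rfl⟩ := Submodule.mem_span_singleton.mp hy.1
        rcases eq_or_ne c 0 with rfl | hc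
        · simp
        · exact absurd ((Submodule.smul_mem_iff _ hc).mp hy.2) hi
      have h2 := Submodule.finrank_sup_add_finrank_inf_eq (Submodule.span ℝ {bas i})
        (Submodule.span ℝ S)
      rw [hinf, finrank_span_singleton hx0, finrank_bot] at h2
      omega
    obtain ⟨S', hSS', hS'Λ, hrank⟩ := ih (insert (bas i) S)
      (Set.insert_subset (hbasΛ i) hS) (by rw [hins]; omega)
    exact ⟨S', (Set.subset_insert _ _).trans hSS', hS'Λ, by rw [hrank, hins]; omega⟩

lemma aux_final (c : ℝ) (hc : 1 ≤ c) (n d v f : ℕ) (X M P : ℝ)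
    (hn16 : 16 ≤ n)
    (hnc : (2:ℝ) ≤ (n:ℝ) ^ ((1:ℝ)/(100*c)))
    (hM : (n:ℝ) ^ ((n:ℝ)/8) ≤ M)
    (hP1 : (1:ℝ) ≤ P)
    (hPd : P ^ d ≤ M ^ f)
    (hXP : X ≤ 2^n * P)
    (hdcn : (d:ℝ) ≤ c * n)
    (hv : v = min d (n/2 - 1))
    (hf : f = d - v)
    (hP0d : d = 0 → P = 1) :
    X ≤ (n:ℝ) ^ (-(n:ℝ) / (25 * c)) * M := by
  have hc0 : (0:ℝ) < c := lt_of_lt_of_le one_pos hc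
  have hn0 : (0:ℝ) < (n:ℝ) := by exact_mod_cast (by omega : 0 < n)
  have hn1 : (1:ℝ) < (n:ℝ) := by exact_mod_cast (by omega : 1 < n)
  have hM1 : (1:ℝ) ≤ M := by
    refine le_trans ?_ hM
    calc (1:ℝ) = (n:ℝ) ^ (0:ℝ) := (Real.rpow_zero _).symm
      _ ≤ (n:ℝ) ^ ((n:ℝ)/8) := Real.rpow_le_rpow_of_exponent_le hn1.le (by positivity)
  have hM0 : (0:ℝ) ≤ M := le_trans zero_le_one hM1
  have hP0 : (0:ℝ) ≤ P := le_trans zero_le_one hP1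
  have h2n : (2:ℝ)^n ≤ (n:ℝ)^((n:ℝ)/(100*c)) := by
    calc (2:ℝ)^n ≤ ((n:ℝ)^((1:ℝ)/(100*c)))^n := pow_le_pow_left₀ (by norm_num) hnc n
      _ = (n:ℝ)^((n:ℝ)/(100*c)) := by
          rw [← Real.rpow_natCast ((n:ℝ)^((1:ℝ)/(100*c))) n, ← Real.rpow_mul hn0.le]
          congr 1; ring
  have hR0 : (0:ℝ) ≤ (n:ℝ) ^ (-(n:ℝ) / (25 * c)) := Real.rpow_nonneg hn0.le _
  rcases Nat.eq_zero_or_pos d with hd0 | hd1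
  · have hP : P = 1 := hP0d hd0
    have hexp : (n:ℝ)/(100*c) ≤ (n:ℝ)/8 + (-(n:ℝ)/(25*c)) := by
      have h1 : (n:ℝ)/(100*c) + (n:ℝ)/(25*c) ≤ (n:ℝ)/8 := by
        rw [div_add_div _ _ (by positivity) (by positivity),
          div_le_div_iff₀ (by positivity) (by norm_num)]
        nlinarith [mul_nonneg hc0.le hn0.le,
          mul_nonneg (mul_nonneg hc0.le hn0.le) (sub_nonneg.mpr hc)]
      have h2 : -(n:ℝ)/(25*c) = -((n:ℝ)/(25*c)) := by ring
      rw [h2]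
      linarith
    calc X ≤ 2^n * P := hXP
      _ = 2^n := by rw [hP, mul_one]
      _ ≤ (n:ℝ)^((n:ℝ)/(100*c)) := h2n
      _ ≤ (n:ℝ)^((n:ℝ)/8 + (-(n:ℝ)/(25*c))) := Real.rpow_le_rpow_of_exponent_le hn1.le hexp
      _ = (n:ℝ)^(-(n:ℝ)/(25*c)) * (n:ℝ)^((n:ℝ)/8) := by rw [Real.rpow_add hn0, mul_comm]
      _ ≤ (n:ℝ)^(-(n:ℝ)/(25*c)) * M := mul_le_mul_of_nonneg_left hM hR0
  · have h5cv : 2*(d:ℝ) ≤ 5*c*(v:ℝ) := by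
      rcases le_or_gt d (n/2 - 1) with h | h
      · rw [hv, min_eq_left h]
        nlinarith [(Nat.cast_nonneg d : (0:ℝ) ≤ (d:ℝ))]
      · have hv' : v = n/2 - 1 := by rw [hv]; exact min_eq_right (le_of_lt h)
        have hnat : n ≤ 2 * v + 3 := by omega
        have hnatR : (n:ℝ) ≤ 2*(v:ℝ) + 3 := by exact_mod_cast hnat
        have hn15 : (15:ℝ) ≤ (n:ℝ) := by exact_mod_cast (by omega : (15:ℕ) ≤ n)
        nlinarith [mul_nonneg hc0.le (sub_nonneg.mpr hn15),
          mul_nonneg hc0.le (sub_nonneg.mpr hnatR)]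
    have hexp2 : ((n:ℝ)/(100*c)) * d ≤ ((n:ℝ)/8) * v + (-(n:ℝ)/(25*c)) * d := by
      have hmul := mul_le_mul_of_nonneg_left h5cv
        (le_of_lt (show (0:ℝ) < (n:ℝ)/(40*c) by positivity))
      have e3 : (n:ℝ)/(40*c) * (5*c*(v:ℝ)) = (n:ℝ)/8 * v := by field_simp; ring
      have e4 : (n:ℝ)/(40*c) * (2*(d:ℝ)) = (n:ℝ)/(100*c)*d + ((n:ℝ)/(25*c))*d := by
        field_simp; ring
      rw [e3, e4] at hmul
      have e5 : (-(n:ℝ)/(25*c)) * d = -(((n:ℝ)/(25*c))*d) := by ring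
      rw [e5]
      linarith
    have h2nd : ((2:ℝ)^n)^d ≤ ((n:ℝ)^(-(n:ℝ)/(25*c)))^d * M^v := by
      have e1 : ((n:ℝ)^(-(n:ℝ)/(25*c)))^d = (n:ℝ)^((-(n:ℝ)/(25*c)) * d) := by
        rw [← Real.rpow_natCast ((n:ℝ)^(-(n:ℝ)/(25*c))) d, ← Real.rpow_mul hn0.le]
      have e2 : ((n:ℝ)^((n:ℝ)/8))^v = (n:ℝ)^(((n:ℝ)/8) * v) := by
        rw [← Real.rpow_natCast ((n:ℝ)^((n:ℝ)/8)) v, ← Real.rpow_mul hn0.le]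
      calc ((2:ℝ)^n)^d ≤ ((n:ℝ)^((n:ℝ)/(100*c)))^d := pow_le_pow_left₀ (by positivity) h2n d
        _ = (n:ℝ)^(((n:ℝ)/(100*c))*(d:ℝ)) := by
            rw [← Real.rpow_natCast ((n:ℝ)^((n:ℝ)/(100*c))) d, ← Real.rpow_mul hn0.le]
        _ ≤ (n:ℝ)^(((n:ℝ)/8)*(v:ℝ) + (-(n:ℝ)/(25*c))*(d:ℝ)) :=
            Real.rpow_le_rpow_of_exponent_le hn1.le hexp2
        _ = (n:ℝ)^((-(n:ℝ)/(25*c))*(d:ℝ)) * (n:ℝ)^(((n:ℝ)/8)*(v:ℝ)) := by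
            rw [← Real.rpow_add hn0]; congr 1; ring
        _ = ((n:ℝ)^(-(n:ℝ)/(25*c)))^d * ((n:ℝ)^((n:ℝ)/8))^v := by rw [e1, e2]
        _ ≤ ((n:ℝ)^(-(n:ℝ)/(25*c)))^d * M^v := mul_le_mul_of_nonneg_left
            (pow_le_pow_left₀ (Real.rpow_nonneg hn0.le _) hM v) (pow_nonneg hR0 d)
    have hvfd : v + f = d := by
      rw [hv, hf]
      have : min d (n/2-1) ≤ d := min_le_left _ _
      omega
    have hkey : ((2:ℝ)^n * P)^d ≤ ((n:ℝ)^(-(n:ℝ)/(25*c)) * M)^d := by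
      rw [mul_pow, mul_pow]
      calc ((2:ℝ)^n)^d * P^d ≤ ((2:ℝ)^n)^d * M^f :=
          mul_le_mul_of_nonneg_left hPd (by positivity)
        _ ≤ (((n:ℝ)^(-(n:ℝ)/(25*c)))^d * M^v) * M^f :=
            mul_le_mul_of_nonneg_right h2nd (pow_nonneg hM0 f)
        _ = ((n:ℝ)^(-(n:ℝ)/(25*c)))^d * M^d := by rw [mul_assoc, ← pow_add, hvfd]
    have hfin : (2:ℝ)^n * P ≤ (n:ℝ)^(-(n:ℝ)/(25*c)) * M :=
      le_of_pow_le_pow_left₀ (by omega) (mul_nonneg hR0 hM0) hkey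
    exact le_trans hXP hfin

/-- deterministic form of the main theorem. -/
theorem main_theorem_deterministic (c : ℝ) (hc : 1 ≤ c) :
    ∃ N : ℕ, ∀ n : ℕ, N ≤ n →
    ∀ (bas : Fin n → EuclideanSpace ℝ (Fin n)), LinearIndependent ℝ bas →
    |(Matrix.of (fun i j : Fin n => bas j i)).det| = 1 →
    ∀ (Λ : Set (EuclideanSpace ℝ (Fin n))),
      Λ = {x | ∃ a : Fin n → ℤ, x = ∑ i, (a i : ℝ) • bas i} →
    (∀ W : Submodule ℝ (EuclideanSpace ℝ (Fin n)),
      Module.finrank ℝ W = n / 2 →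
      (∃ S : Set (EuclideanSpace ℝ (Fin n)), S ⊆ Λ ∧ W = Submodule.span ℝ S) →
      (Λ ∩ ↑W ∩ Metric.closedBall 0 ((n : ℝ) ^ ((5 : ℝ) / 8))).ncard ≤ 2 ^ n) →
    ∀ A : Set (EuclideanSpace ℝ (Fin n)),
      A = Λ ∩ Metric.closedBall 0 ((n : ℝ) ^ ((5 : ℝ) / 8)) →
      (n : ℝ) ^ ((n : ℝ) / 8) ≤ (A.ncard : ℝ) →
    ∀ (d : ℕ) (x₀ : EuclideanSpace ℝ (Fin n))
      (x : Fin d → EuclideanSpace ℝ (Fin n)) (a b : Fin d → ℤ),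
      (∀ i, a i ≤ b i) → (d : ℝ) ≤ c * n →
    ∀ G : Set (EuclideanSpace ℝ (Fin n)),
      G = {y | ∃ α : Fin d → ℤ, (∀ i, a i ≤ α i ∧ α i ≤ b i) ∧
        y = x₀ + ∑ i, (α i : ℝ) • x i} →
      (∏ i, ((b i - a i + 1 : ℤ) : ℝ)) ≤ (A.ncard : ℝ) →
      ((A ∩ G).ncard : ℝ) ≤ (n : ℝ) ^ (-(n : ℝ) / (25 * c)) * (A.ncard : ℝ) := by
  classical
  have hc0 : (0:ℝ) < c := lt_of_lt_of_le one_pos hc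
  refine ⟨⌈(2:ℝ)^(100*c)⌉₊ + 16, ?_⟩
  intro n hn bas hli hdet Λ hΛ hW A hA hM d x₀ x a b hab hdcn G hG hGsize
  have hn16 : 16 ≤ n := by omega
  have hn0 : (0:ℝ) < (n:ℝ) := by exact_mod_cast (by omega : 0 < n)
  have hn1 : (1:ℝ) < (n:ℝ) := by exact_mod_cast (by omega : 1 < n)
  -- 2 ≤ n ^ (1/(100c))
  have hnceil : (2:ℝ)^(100*c) ≤ (n:ℝ) := by
    have h1 : ⌈(2:ℝ)^(100*c)⌉₊ ≤ n := by omega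
    exact le_trans (Nat.le_ceil _) (by exact_mod_cast h1)
  have hnc : (2:ℝ) ≤ (n:ℝ) ^ ((1:ℝ)/(100*c)) := by
    have h100c : (100*c) ≠ 0 := by positivity
    have h2 : ((2:ℝ)^(100*c)) ^ ((1:ℝ)/(100*c)) ≤ (n:ℝ) ^ ((1:ℝ)/(100*c)) :=
      Real.rpow_le_rpow (by positivity) hnceil (by positivity)
    rwa [← Real.rpow_mul (by norm_num) (100*c) ((1:ℝ)/(100*c)),
      mul_one_div, div_self h100c, Real.rpow_one] at h2
  set M : ℝ := (A.ncard : ℝ) with hMdef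
  have hM1 : (1:ℝ) ≤ M := by
    refine le_trans ?_ hM
    calc (1:ℝ) = (n:ℝ) ^ (0:ℝ) := (Real.rpow_zero _).symm
      _ ≤ (n:ℝ) ^ ((n:ℝ)/8) := Real.rpow_le_rpow_of_exponent_le hn1.le (by positivity)
  have hAfin : A.Finite := by
    by_contra h
    have h' : A.Infinite := h
    rw [hMdef, h'.ncard] at hM
    norm_num at hM
    nlinarith [Real.rpow_pos_of_pos hn0 ((n:ℝ)/8)]
  have hbasΛ : ∀ i, bas i ∈ Λ := by
    intro i
    rw [hΛ]
    refine ⟨fun j => if j = i then 1 else 0, ?_⟩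
    simp [ite_smul]
  have hspantop : Submodule.span ℝ (Set.range bas) = ⊤ := by
    have : Nonempty (Fin n) := ⟨⟨0, by omega⟩⟩
    exact hli.span_eq_top_of_card_eq_finrank (by simp [finrank_euclideanSpace_fin])
  -- the selected subset F of "fixed" coordinates
  set v : ℕ := min d (n/2 - 1) with hvdef
  set f : ℕ := d - v with hfdef
  obtain ⟨F, hFcard, hFmin⟩ := aux_exists_min_subset (fun i => b i - a i + 1) f (by omega)
  have hFccard : Fᶜ.card = v := by
    rw [Finset.card_compl, hFcard, Fintype.card_fin]
    omega
  have hL1 : ∀ i : Fin d, 1 ≤ b i - a i + 1 := fun i => by have := hab i; omega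
  -- selection of GAP coordinates
  obtain ⟨αsel, hαsel⟩ : ∃ αf : EuclideanSpace ℝ (Fin n) → (Fin d → ℤ),
      ∀ y ∈ G, (∀ i, a i ≤ αf y i ∧ αf y i ≤ b i) ∧
        y = x₀ + ∑ i, ((αf y i : ℝ)) • x i := by
    refine ⟨fun y =>
      if h : ∃ α : Fin d → ℤ, (∀ i, a i ≤ α i ∧ α i ≤ b i) ∧ y = x₀ + ∑ i, (α i : ℝ) • x i
      then h.choose else 0, ?_⟩
    intro y hy
    rw [hG, Set.mem_setOf_eq] at hy
    simp only [dif_pos hy]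
    exact hy.choose_spec
  set g : EuclideanSpace ℝ (Fin n) → (Fin d → ℤ) :=
    fun y i => if i ∈ F then αsel y i else 0 with hgdef
  have hSfin : (A ∩ G).Finite := hAfin.inter_of_left G
  set sFin := hSfin.toFinset with hsFdef
  -- fiber bound
  have hfiber : ∀ t : Fin d → ℤ, (sFin.filter (fun y => g y = t)).card ≤ 2 ^ n := by
    intro t
    set fib : Set (EuclideanSpace ℝ (Fin n)) := {y | y ∈ A ∩ G ∧ g y = t} with hfibdef
    have hcards : (sFin.filter (fun y => g y = t)).card = fib.ncard := by
      rw [← Set.ncard_coe_finset]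
      congr 1
      ext y
      simp [hfibdef, hsFdef, Set.Finite.mem_toFinset]
    rw [hcards]
    have hfibA : fib ⊆ A := fun y hy => hy.1.1
    have hfibG : fib ⊆ G := fun y hy => hy.1.2
    have hfibΛ : fib ⊆ Λ := fun y hy => by
      have := hfibA hy; rw [hA] at this; exact this.1
    set p : EuclideanSpace ℝ (Fin n) := x₀ + ∑ i ∈ F, (t i : ℝ) • x i with hpdef
    set Tfin : Finset (EuclideanSpace ℝ (Fin n)) := insert p (Fᶜ.image x) with hTdef
    have hfibspan : fib ⊆ (Submodule.span ℝ (Tfin : Set (EuclideanSpace ℝ (Fin n))) :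
        Set (EuclideanSpace ℝ (Fin n))) := by
      intro y hy
      have hspec := hαsel y (hfibG hy)
      have hyt : ∀ i ∈ F, αsel y i = t i := by
        intro i hiF
        have h := congrFun hy.2 i
        simpa [hgdef, hiF] using h
      have hsumF : ∑ i ∈ F, ((αsel y i : ℝ)) • x i = ∑ i ∈ F, ((t i : ℝ)) • x i :=
        Finset.sum_congr rfl fun i hi => by rw [hyt i hi]
      have hyp : y = p + ∑ i ∈ Fᶜ, ((αsel y i : ℝ)) • x i := by
        calc y = x₀ + ∑ i, ((αsel y i : ℝ)) • x i := hspec.2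
          _ = x₀ + (∑ i ∈ F, ((αsel y i : ℝ)) • x i + ∑ i ∈ Fᶜ, ((αsel y i : ℝ)) • x i) := by
              rw [Finset.sum_add_sum_compl]
          _ = p + ∑ i ∈ Fᶜ, ((αsel y i : ℝ)) • x i := by rw [hsumF, hpdef, add_assoc]
      rw [hyp]
      refine Submodule.add_mem _ (Submodule.subset_span (Finset.mem_insert_self _ _)) ?_
      refine Submodule.sum_mem _ fun i hi => ?_
      exact Submodule.smul_mem _ _ (Submodule.subset_span
        (Finset.mem_insert_of_mem (Finset.mem_image_of_mem x hi)))
    have hrankfib : Module.finrank ℝ (Submodule.span ℝ fib) ≤ 1 + v := by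
      calc Module.finrank ℝ (Submodule.span ℝ fib)
          ≤ Module.finrank ℝ (Submodule.span ℝ (Tfin : Set (EuclideanSpace ℝ (Fin n)))) :=
            Submodule.finrank_mono (Submodule.span_le.mpr hfibspan)
        _ ≤ Tfin.card := finrank_span_finset_le_card Tfin
        _ ≤ (Fᶜ.image x).card + 1 := Finset.card_insert_le _ _
        _ ≤ Fᶜ.card + 1 := by gcongr; exact Finset.card_image_le
        _ = 1 + v := by rw [hFccard]; omega
    have hvn2 : v ≤ n/2 - 1 := min_le_right _ _
    have h12 : 1 + v ≤ n / 2 := by omega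
    obtain ⟨S', hsub, hS'Λ, hrank⟩ := aux_extend bas hspantop Λ hbasΛ
      (n / 2 - Module.finrank ℝ (Submodule.span ℝ fib)) fib hfibΛ (by omega)
    have hrk : Module.finrank ℝ (Submodule.span ℝ S') = n / 2 := by rw [hrank]; omega
    have hWb := hW (Submodule.span ℝ S') hrk ⟨S', hS'Λ, rfl⟩
    refine le_trans (Set.ncard_le_ncard ?_ ?_) hWb
    · intro y hy
      refine ⟨⟨hfibΛ hy, Submodule.subset_span (hsub hy)⟩, ?_⟩
      have := hfibA hy; rw [hA] at this; exact this.2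
    · apply hAfin.subset
      intro y hy
      rw [hA]; exact ⟨hy.1.1, hy.2⟩
  -- image bound
  have himage : (sFin.image g).card ≤ ∏ i ∈ F, (b i + 1 - a i).toNat := by
    have hsub : sFin.image g ⊆ Fintype.piFinset
        (fun i => if i ∈ F then Finset.Icc (a i) (b i) else {0}) := by
      intro t ht
      obtain ⟨y, hy, rfl⟩ := Finset.mem_image.mp ht
      rw [Fintype.mem_piFinset]
      intro i
      by_cases hiF : i ∈ F
      · have hyG : y ∈ G := (hSfin.mem_toFinset.mp hy).2
        have hbd := (hαsel y hyG).1 i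
        simp only [hgdef, hiF, if_true, Finset.mem_Icc]
        exact hbd
      · simp [hgdef, hiF]
    calc (sFin.image g).card
        ≤ (Fintype.piFinset (fun i => if i ∈ F then Finset.Icc (a i) (b i) else {0})).card :=
          Finset.card_le_card hsub
      _ = ∏ i, (if i ∈ F then Finset.Icc (a i) (b i) else {0}).card := Fintype.card_piFinset _
      _ = ∏ i ∈ F, (b i + 1 - a i).toNat := by
          simp only [apply_ite Finset.card, Finset.card_singleton, Int.card_Icc]
          rw [Finset.prod_ite_mem, Finset.univ_inter]
  have hcount : (A ∩ G).ncard ≤ 2 ^ n * ∏ i ∈ F, (b i + 1 - a i).toNat := by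
    have h1 : (A ∩ G).ncard = sFin.card := Set.ncard_eq_toFinset_card _ hSfin
    rw [h1]
    calc sFin.card ≤ 2^n * (sFin.image g).card :=
        Finset.card_le_mul_card_image sFin (2^n) (fun t _ => hfiber t)
      _ ≤ 2^n * ∏ i ∈ F, (b i + 1 - a i).toNat := Nat.mul_le_mul_left _ himage
  -- cast the count to ℝ
  set P : ℝ := ∏ i ∈ F, ((b i - a i + 1 : ℤ) : ℝ) with hPdef
  have hPcast : ((∏ i ∈ F, (b i + 1 - a i).toNat : ℕ) : ℝ) = P := by
    rw [hPdef, Nat.cast_prod]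
    refine Finset.prod_congr rfl fun i _ => ?_
    have hnn : (0:ℤ) ≤ b i + 1 - a i := by have := hab i; omega
    have h1 : ((b i + 1 - a i).toNat : ℤ) = b i + 1 - a i := Int.toNat_of_nonneg hnn
    calc ((b i + 1 - a i).toNat : ℝ) = (((b i + 1 - a i).toNat : ℤ) : ℝ) := by push_cast; ring
      _ = ((b i - a i + 1 : ℤ) : ℝ) := by rw [h1]; push_cast; ring
  have hXP : ((A ∩ G).ncard : ℝ) ≤ 2^n * P := by
    have h := (Nat.cast_le (α := ℝ)).mpr hcount
    rw [Nat.cast_mul, Nat.cast_pow, hPcast] at h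
    exact_mod_cast h
  have hM0 : (0:ℝ) ≤ M := le_trans zero_le_one hM1
  have hP1 : (1:ℝ) ≤ P := by
    rw [hPdef]
    calc (1:ℝ) = ∏ _i ∈ F, (1:ℝ) := (Finset.prod_const_one).symm
      _ ≤ ∏ i ∈ F, ((b i - a i + 1 : ℤ) : ℝ) :=
          Finset.prod_le_prod (fun _ _ => zero_le_one) (fun i _ => by exact_mod_cast hL1 i)
  have hP0 : (0:ℝ) ≤ P := le_trans zero_le_one hP1
  have hPd : P ^ d ≤ M ^ f := by
    have hint := aux_prod_pow (fun i => b i - a i + 1) hL1 F hFmin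
    have h1 : (((∏ i ∈ F, (b i - a i + 1)) ^ d : ℤ) : ℝ) ≤
        (((∏ i, (b i - a i + 1)) ^ F.card : ℤ) : ℝ) := Int.cast_le.mpr hint
    push_cast at h1
    rw [hFcard] at h1
    have h2 : (∏ i, ((b i - a i + 1 : ℤ) : ℝ)) ≤ M := hGsize
    have h3 : (0:ℝ) ≤ ∏ i, ((b i - a i + 1 : ℤ) : ℝ) :=
      Finset.prod_nonneg fun i _ => by exact_mod_cast (zero_le_one.trans (hL1 i) : (0:ℤ) ≤ _)
    calc P ^ d ≤ (∏ i, ((b i - a i + 1 : ℤ) : ℝ)) ^ f := by rw [hPdef]; exact_mod_cast h1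
      _ ≤ M ^ f := pow_le_pow_left₀ h3 h2 f
  have hP0d : d = 0 → P = 1 := by
    intro hd0
    have hF0 : F = ∅ := by
      apply Finset.card_eq_zero.mp
      rw [hFcard, hfdef]
      omega
    rw [hPdef, hF0, Finset.prod_empty]
  exact aux_final c hc n d v f _ M P hn16 hnc hM hP1 hPd hXP hdcn hvdef hfdef hP0d
end
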